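/- There exists a constant C > 0 such that for all λ ∈ (0,1) and all (x,p) ∈ [0,1) × ℝ with |p| ≤ λ^{-1}, 𝒜_λ⁻(x,p) ≤ C·λ·√(H(x,p)). -/

import Mathlib

open MeasureTheory Real

/-- The jump rate kernel `𝒥_λ(p,p')`. -/
noncomputable def Jker (lam p p' : ℝ) : ℝ :=
  ((1 + lam) / 64) * |p' - p| *
    Real.exp (-(1/2) * ((1 - lam)/2 * p - (1 + lam)/2 * p')^2)

/-- The Hamiltonian `H(x,p) = p²/2 + V(x)`. -/
noncomputable def Ham (V : ℝ → ℝ) (x p : ℝ) : ℝ := p^2 / 2 + V x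

/-- `𝒜_λ(x,p)`. -/
noncomputable def Acal (V : ℝ → ℝ) (lam x p : ℝ) : ℝ :=
  ∫ p' : ℝ, (Real.sqrt (2 * Ham V x p') - Real.sqrt (2 * Ham V x p)) * Jker lam p p'

/-- Negative part `𝒜_λ⁻`. -/
noncomputable def Aminus (V : ℝ → ℝ) (lam x p : ℝ) : ℝ := max (-(Acal V lam x p)) 0

/-! The map `q ↦ √(q² + 2V(x)) = √(2H(x,q))` is convex with slope `p / √(2H(x,p))` at `p`, so
`𝒜_λ(x,p)` is bounded below by this slope times the first moment `M = ∫ (p' - p) 𝒥_λ(p,p') dp'`.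
The substitution `v = (1+λ)/2 · p' - (1-λ)/2 · p` turns `M` into a multiple of
`∫ (v - m) |v - m| e^{-v²/2} dv` with `m = λp`; this vanishes at `m = 0` by oddness and is
Lipschitz in `m`, so `|M| ≲ λ|p|` as long as `|λp| ≤ 1`. Since `|p| ≤ √(2H)`, this gives
`𝒜_λ⁻ ≲ λ p² / √(2H) ≤ λ √(2H)`. -/

lemma mul_sub_le_sqrt_sq_add_sub {c : ℝ} (hc : 0 ≤ c) (p q : ℝ) :
    p / √(p ^ 2 + c) * (q - p) ≤ √(q ^ 2 + c) - √(p ^ 2 + c) := by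
  set S := √(p ^ 2 + c)
  set T := √(q ^ 2 + c)
  have hS2 : S ^ 2 = p ^ 2 + c := sq_sqrt (by positivity)
  have hT2 : T ^ 2 = q ^ 2 + c := sq_sqrt (by positivity)
  have hS0 : 0 ≤ S := sqrt_nonneg _
  rcases hS0.eq_or_lt with hS | hS
  · rw [← hS, div_zero, zero_mul, sub_zero]
    exact sqrt_nonneg _
  -- Cauchy–Schwarz for the vectors `(p, √c)` and `(q, √c)`
  have hCS : p * q + c ≤ S * T := by
    refine abs_le_of_sq_le_sq' ?_ (by positivity) |>.2
    rw [mul_pow, hS2, hT2]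
    nlinarith [mul_nonneg hc (sq_nonneg (p - q))]
  rw [div_mul_eq_mul_div, div_le_iff₀ hS]
  nlinarith

lemma abs_sqrt_sq_add_sub_sqrt_sq_add_le {c : ℝ} (hc : 0 ≤ c) (p q : ℝ) :
    |√(q ^ 2 + c) - √(p ^ 2 + c)| ≤ |q - p| := by
  have slope_le : ∀ r s : ℝ, |r / √(r ^ 2 + c) * (s - r)| ≤ |s - r| := fun r s => by
    rw [abs_mul, abs_div, abs_of_nonneg (sqrt_nonneg _)]
    exact mul_le_of_le_one_left (abs_nonneg _)
      (div_le_one_of_le₀ (abs_le_sqrt (by linarith)) (sqrt_nonneg _))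
  rw [abs_sub_le_iff]
  constructor
  · linarith [mul_sub_le_sqrt_sq_add_sub hc q p, neg_abs_le (q / √(q ^ 2 + c) * (p - q)),
      slope_le q p, abs_sub_comm p q]
  · linarith [mul_sub_le_sqrt_sq_add_sub hc p q, neg_abs_le (p / √(p ^ 2 + c) * (q - p)),
      slope_le p q]

lemma abs_mul_abs_sub_mul_abs_le (s t : ℝ) :
    |(s * |s| - t * |t|)| ≤ |s - t| * (|s| + |t|) := by
  rcases abs_cases s with ⟨hs, _⟩ | ⟨hs, _⟩ <;> rcases abs_cases t with ⟨ht, _⟩ | ⟨ht, _⟩ <;>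
    rcases abs_cases (s - t) with ⟨hst, _⟩ | ⟨hst, _⟩ <;>
    rw [hs, ht, hst, abs_le] <;> constructor <;> nlinarith

noncomputable def gaussianSignedSq (m v : ℝ) : ℝ := (v - m) * |v - m| * exp (-(1/2) * v ^ 2)

lemma abs_gaussianSignedSq_sub_le (m v : ℝ) :
    |gaussianSignedSq m v - gaussianSignedSq 0 v| ≤
      |m| * ((2 * |v| + |m|) * exp (-(1/2) * v ^ 2)) := by
  have hdiff := abs_mul_abs_sub_mul_abs_le (v - m) v
  rw [sub_sub_cancel_left, abs_neg] at hdiff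
  have hshift : |v - m| ≤ |v| + |m| := abs_sub _ _
  simp only [gaussianSignedSq, sub_zero, ← sub_mul, abs_mul, abs_of_pos (exp_pos _)]
  calc |((v - m) * |v - m| - v * |v|)| * exp (-(1/2) * v ^ 2)
      ≤ |m| * (|v - m| + |v|) * exp (-(1/2) * v ^ 2) := by gcongr
    _ ≤ |m| * ((2 * |v| + |m|) * exp (-(1/2) * v ^ 2)) := by
      rw [← mul_assoc]; gcongr _ * ?_ * _; linarith

lemma integrable_linear_abs_mul_gaussian (a : ℝ) :
    Integrable fun v : ℝ => (2 * |v| + a) * exp (-(1/2) * v ^ 2) := by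
  have habs : Integrable fun v : ℝ => |v| * exp (-(1/2) * v ^ 2) := by
    simpa [abs_mul, abs_of_pos (exp_pos _)] using
      (integrable_mul_exp_neg_mul_sq (by norm_num : (0:ℝ) < 1/2)).abs
  simpa only [add_mul, mul_assoc] using
    (habs.const_mul 2).fun_add ((integrable_exp_neg_mul_sq (by norm_num : (0:ℝ) < 1/2)).const_mul a)

lemma integrable_gaussianSignedSq_zero : Integrable (gaussianSignedSq 0) := by
  refine (integrable_rpow_mul_exp_neg_mul_sq (by norm_num : (0:ℝ) < 1/2)
    (by norm_num : (-1:ℝ) < 2)).mono' (by unfold gaussianSignedSq; fun_prop) ?_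
  filter_upwards with v
  simp [gaussianSignedSq, abs_of_pos (exp_pos _), ← sq]

lemma integral_gaussianSignedSq_zero : ∫ v, gaussianSignedSq 0 v = 0 := by
  have hodd : ∀ v, gaussianSignedSq 0 (-v) = -gaussianSignedSq 0 v := fun v => by
    simp only [gaussianSignedSq, sub_zero, abs_neg, neg_sq]; ring
  have := integral_neg_eq_self (gaussianSignedSq 0) volume
  simp only [hodd, integral_neg] at this
  linarith

lemma integrable_gaussianSignedSq (m : ℝ) : Integrable (gaussianSignedSq m) := by
  have hdiff : Integrable fun v => gaussianSignedSq m v - gaussianSignedSq 0 v :=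
    ((integrable_linear_abs_mul_gaussian |m|).const_mul |m|).mono'
      (by unfold gaussianSignedSq; fun_prop)
      (.of_forall fun v => (abs_gaussianSignedSq_sub_le m v))
  exact (hdiff.fun_add integrable_gaussianSignedSq_zero).congr
    (.of_forall fun v => sub_add_cancel _ _)

lemma abs_integral_gaussianSignedSq_le {m : ℝ} (hm : |m| ≤ 1) :
    |∫ v, gaussianSignedSq m v| ≤ |m| * ∫ v, (2 * |v| + 1) * exp (-(1/2) * v ^ 2) := by
  have hcentred : ∫ v, gaussianSignedSq m v =
      ∫ v, (gaussianSignedSq m v - gaussianSignedSq 0 v) := by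
    rw [integral_sub (integrable_gaussianSignedSq m) integrable_gaussianSignedSq_zero,
      integral_gaussianSignedSq_zero, sub_zero]
  rw [hcentred, ← integral_const_mul]
  refine norm_integral_le_of_norm_le (f := fun v => gaussianSignedSq m v - gaussianSignedSq 0 v)
    ((integrable_linear_abs_mul_gaussian 1).const_mul _) (.of_forall fun v => ?_)
  rw [Real.norm_eq_abs]
  refine (abs_gaussianSignedSq_sub_le m v).trans ?_
  gcongr

lemma Jker_nonneg {lam : ℝ} (hlam : 0 ≤ 1 + lam) (p p' : ℝ) : 0 ≤ Jker lam p p' := by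
  unfold Jker; positivity

lemma sub_mul_Jker {lam : ℝ} (hlam : 0 < 1 + lam) (p p' : ℝ) :
    (p' - p) * Jker lam p p' = (16 * (1 + lam))⁻¹ *
      gaussianSignedSq (lam * p) ((1 + lam) / 2 * p' - (1 - lam) / 2 * p) := by
  have hshift : (1 + lam) / 2 * p' - (1 - lam) / 2 * p - lam * p = (1 + lam) / 2 * (p' - p) := by
    ring
  have hsq : ((1 - lam) / 2 * p - (1 + lam) / 2 * p') ^ 2 =
      ((1 + lam) / 2 * p' - (1 - lam) / 2 * p) ^ 2 := by ring
  unfold Jker gaussianSignedSq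
  rw [hshift, hsq, abs_mul, abs_of_pos (half_pos hlam)]
  field_simp
  ring

lemma integrable_sub_mul_Jker {lam : ℝ} (hlam : 0 < 1 + lam) (p : ℝ) :
    Integrable fun p' => (p' - p) * Jker lam p p' := by
  simp_rw [sub_mul_Jker hlam]
  exact (((integrable_gaussianSignedSq (lam * p)).comp_sub_right ((1 - lam) / 2 * p)).comp_mul_left'
    (half_pos hlam).ne').const_mul _

lemma integral_sub_mul_Jker {lam : ℝ} (hlam : 0 < 1 + lam) (p : ℝ) :
    ∫ p', (p' - p) * Jker lam p p' = (8 * (1 + lam) ^ 2)⁻¹ * ∫ v, gaussianSignedSq (lam * p) v := by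
  have hsubst := Measure.integral_comp_mul_left
    (fun v => gaussianSignedSq (lam * p) (v - (1 - lam) / 2 * p)) ((1 + lam) / 2)
  simp only [integral_sub_right_eq_self, smul_eq_mul] at hsubst
  simp_rw [sub_mul_Jker hlam]
  rw [integral_const_mul, hsubst, abs_of_pos (inv_pos.2 (half_pos hlam)), ← mul_assoc]
  congr 1
  field_simp
  ring

lemma abs_integral_sub_mul_Jker_le {lam p : ℝ} (hlam : 0 ≤ lam) (hm : |lam * p| ≤ 1) :
    |∫ p', (p' - p) * Jker lam p p'| ≤
      |lam * p| * ((∫ v, (2 * |v| + 1) * exp (-(1/2) * v ^ 2)) / 8) := by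
  have hlam' : 0 < 1 + lam := by linarith
  rw [integral_sub_mul_Jker hlam', abs_mul, abs_of_pos (by positivity)]
  have hmoment := abs_integral_gaussianSignedSq_le hm
  have hweight : (8 * (1 + lam) ^ 2)⁻¹ ≤ 8⁻¹ :=
    inv_anti₀ (by norm_num) (by nlinarith)
  calc (8 * (1 + lam) ^ 2)⁻¹ * |∫ v, gaussianSignedSq (lam * p) v|
      ≤ 8⁻¹ * (|lam * p| * ∫ v, (2 * |v| + 1) * exp (-(1/2) * v ^ 2)) := by
        gcongr
    _ = _ := by ring

lemma two_mul_Ham (V : ℝ → ℝ) (x q : ℝ) : 2 * Ham V x q = q ^ 2 + 2 * V x := by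
  unfold Ham; ring

lemma mul_integral_sub_mul_Jker_le_Acal {V : ℝ → ℝ} {x lam : ℝ} (hVx : 0 ≤ V x)
    (hlam : 0 < 1 + lam) (p : ℝ) :
    p / √(2 * Ham V x p) * ∫ p', (p' - p) * Jker lam p p' ≤ Acal V lam x p := by
  have hc : 0 ≤ 2 * V x := by linarith
  have hJ := integrable_sub_mul_Jker hlam p
  have hintegrand :
      Integrable fun p' => (√(p' ^ 2 + 2 * V x) - √(p ^ 2 + 2 * V x)) * Jker lam p p' := by
    refine hJ.norm.mono' (by unfold Jker; fun_prop) (.of_forall fun p' => ?_)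
    rw [norm_mul, norm_mul, Real.norm_eq_abs, Real.norm_eq_abs]
    gcongr
    exact abs_sqrt_sq_add_sub_sqrt_sq_add_le hc p p'
  unfold Acal
  simp_rw [two_mul_Ham]
  rw [← integral_const_mul]
  refine integral_mono (hJ.const_mul _) hintegrand fun p' => ?_
  rw [← mul_assoc]
  exact mul_le_mul_of_nonneg_right (mul_sub_le_sqrt_sq_add_sub hc p p') (Jker_nonneg hlam.le p p')

lemma integral_linear_abs_mul_gaussian_pos :
    0 < ∫ v, (2 * |v| + 1) * exp (-(1/2) * v ^ 2) := by
  refine (integral_pos_iff_support_of_nonneg (fun v => by positivity)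
    (integrable_linear_abs_mul_gaussian 1)).2 ?_
  rw [Function.support_eq_univ fun v => by positivity]
  simp

theorem stmt12_general (V : ℝ → ℝ) (hVnn : ∀ x, 0 ≤ V x) :
    ∃ C > 0, ∀ lam ∈ Set.Ioo (0:ℝ) 1, ∀ x ∈ Set.Ico (0:ℝ) 1, ∀ p : ℝ,
      |p| ≤ lam⁻¹ → Aminus V lam x p ≤ C * lam * Real.sqrt (Ham V x p) := by
  set κ := ∫ v, (2 * |v| + 1) * exp (-(1/2) * v ^ 2)
  have hκ : 0 < κ := integral_linear_abs_mul_gaussian_pos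
  refine ⟨√2 * (κ / 8), by positivity, ?_⟩
  rintro lam ⟨hlam, -⟩ x - p hp
  have hm : |lam * p| ≤ 1 := by
    rw [abs_mul, abs_of_pos hlam]
    exact (mul_le_mul_of_nonneg_left hp hlam.le).trans_eq (mul_inv_cancel₀ hlam.ne')
  have hlower := mul_integral_sub_mul_Jker_le_Acal (hVnn x) (by linarith : 0 < 1 + lam) p
  have hmoment := abs_integral_sub_mul_Jker_le hlam.le hm
  rw [abs_mul, abs_of_pos hlam] at hmoment
  set S := √(2 * Ham V x p)
  have hS : S = √2 * √(Ham V x p) := sqrt_mul zero_le_two _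
  have hpS : |p| ≤ S := abs_le_sqrt (by rw [two_mul_Ham]; linarith [hVnn x])
  set M := ∫ p', (p' - p) * Jker lam p p'
  refine max_le ?_ (by positivity)
  calc -Acal V lam x p ≤ -(p / S * M) := neg_le_neg hlower
    _ ≤ |p| / S * |M| := (neg_le_abs _).trans_eq <| by
        rw [abs_mul, abs_div, abs_of_nonneg (sqrt_nonneg _)]
    _ ≤ 1 * (lam * S * (κ / 8)) := by
        gcongr
        · exact div_le_one_of_le₀ hpS (sqrt_nonneg _)
        · exact hmoment.trans (by gcongr)
    _ = √2 * (κ / 8) * lam * √(Ham V x p) := by rw [hS]; ring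

theorem stmt12 (V : ℝ → ℝ) (hV : ContDiff ℝ 1 V) (hper : ∀ x, V (x + 1) = V x)
    (hVnn : ∀ x, 0 ≤ V x) :
    ∃ C > 0, ∀ lam ∈ Set.Ioo (0:ℝ) 1, ∀ x ∈ Set.Ico (0:ℝ) 1, ∀ p : ℝ,
      |p| ≤ lam⁻¹ → Aminus V lam x p ≤ C * lam * Real.sqrt (Ham V x p) :=
  stmt12_general V hVnn
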